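/- arXiv:2410.08985 — 3 statements merged into one kernel-verified Lean document; each statement's English description precedes it below -/
import Mathlib

section
/- Let L_1, …, L_n be i.i.d. Bernoulli random variables with success probability μ ∈ [0,1], let α ∈ [0,1] with μ > α, and set S = Σ_{i=1}^n L_i. Define the p-value p = P(Binom(n, α) ≤ S), i.e., p = F_{n,α}(S) where F_{n,α} is the cumulative distribution function of a Binomial(n, α) random variable. Then p is super-uniform: for every u ∈ [0,1], P(p ≤ u) ≤ u. -/
/-!
A sum `S` of independent `{0,1}`-valued variables whose success probabilities are at least `α`
is stochastically larger than `Binom(n, α)`: `P(S ≤ k) ≤ F_{n,α}(k)` for every `k`, by induction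
on the number of summands, conditioning on the last one and using Pascal's rule for `F_{n,α}`.
For any monotone `F` that dominates the CDF of a discrete `X` in this way, `F(X)` is
super-uniform: `{F(X) ≤ u}` is the increasing union of the events `{X ≤ k}` over the `k` with
`F k ≤ u`, and each of these has probability at most `F k ≤ u`.
-/

open MeasureTheory ProbabilityTheory

/-- The CDF of a Binomial(n, α) random variable evaluated at `k`:
`F_{n,α}(k) = Σ_{j=0}^{k} C(n,j) α^j (1-α)^{n-j}`. -/
noncomputable def binomCDF (n : ℕ) (α : ℝ) (k : ℕ) : ℝ :=
  ∑ j ∈ Finset.range (k + 1), (n.choose j : ℝ) * α ^ j * (1 - α) ^ (n - j)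

lemma binomCDF_monotone {n : ℕ} {α : ℝ} (hα0 : 0 ≤ α) (hα1 : α ≤ 1) : Monotone (binomCDF n α) := by
  intro k k' hk
  apply Finset.sum_le_sum_of_subset_of_nonneg (Finset.range_subset_range.2 (by omega))
  intro j _ _
  have : 0 ≤ 1 - α := by linarith
  positivity

@[simp]
lemma binomCDF_zero_left (α : ℝ) (k : ℕ) : binomCDF 0 α k = 1 := by
  simp [binomCDF, Finset.sum_range_succ']

lemma binomCDF_succ_zero (n : ℕ) (α : ℝ) : binomCDF (n + 1) α 0 = (1 - α) * binomCDF n α 0 := by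
  simp [binomCDF, pow_succ, mul_comm]

lemma choose_mul_pow_succ_succ (n j : ℕ) (α : ℝ) :
    ((n + 1).choose (j + 1) : ℝ) * α ^ (j + 1) * (1 - α) ^ (n + 1 - (j + 1)) =
      (1 - α) * ((n.choose (j + 1) : ℝ) * α ^ (j + 1) * (1 - α) ^ (n - (j + 1))) +
        α * ((n.choose j : ℝ) * α ^ j * (1 - α) ^ (n - j)) := by
  rw [Nat.choose_succ_succ, Nat.cast_add, Nat.add_sub_add_right]
  rcases le_or_gt (j + 1) n with hj | hj
  · rw [show n - j = n - (j + 1) + 1 by omega, pow_succ]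
    ring
  · rw [Nat.choose_eq_zero_of_lt hj]
    ring

lemma binomCDF_succ_succ (n k : ℕ) (α : ℝ) :
    binomCDF (n + 1) α (k + 1) = (1 - α) * binomCDF n α (k + 1) + α * binomCDF n α k := by
  simp only [binomCDF]
  rw [Finset.sum_range_succ' _ (k + 1), Finset.sum_range_succ' _ (k + 1)]
  simp only [choose_mul_pow_succ_succ, Finset.sum_add_distrib, ← Finset.mul_sum]
  simp only [pow_succ, Nat.choose_zero_right, Nat.cast_one, pow_zero, mul_one, tsub_zero, one_mul]
  ring

section superuniform

variable {Ω : Type*} [MeasurableSpace Ω] (P : Measure Ω)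

def IsSuperUniform (p : Ω → ℝ) : Prop :=
  ∀ u : ℝ, P {ω | p ω ≤ u} ≤ ENNReal.ofReal u

variable {P}

lemma Monotone.isSuperUniform_comp {β : Type*} [LinearOrder β] [Countable β] {X : Ω → β}
    {F : β → ℝ} (hF : Monotone F) (hX : ∀ k, P {ω | X ω ≤ k} ≤ ENNReal.ofReal (F k)) :
    IsSuperUniform P (fun ω => F (X ω)) := by
  intro u
  let A := {k | F k ≤ u}
  have hunion : {ω | F (X ω) ≤ u} = ⋃ k : A, {ω | X ω ≤ k} := by
    ext ω
    simp only [Set.mem_ofPred_eq, Set.mem_iUnion, Subtype.exists, exists_prop]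
    exact ⟨fun h => ⟨X ω, h, le_rfl⟩, fun ⟨k, hk, hXk⟩ => (hF hXk).trans hk⟩
  have hmono : Monotone fun k : A => {ω | X ω ≤ (k : β)} :=
    fun k k' hkk' ω (hω : X ω ≤ k) => hω.trans hkk'
  rw [hunion, hmono.measure_iUnion]
  exact iSup_le fun k => (hX k).trans (ENNReal.ofReal_le_ofReal k.2)

end superuniform

section dominance

variable {Ω : Type*} [MeasurableSpace Ω] {P : Measure Ω} [IsProbabilityMeasure P]

lemma measureReal_add_le_eq_of_indepFun {B T : Ω → ℕ} (hB : Measurable B) (hT : Measurable T)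
    (hB1 : ∀ ω, B ω ≤ 1) (hBT : IndepFun B T P) (k : ℕ) :
    P.real {ω | B ω + T ω ≤ k} = (1 - P.real {ω | B ω = 1}) * P.real {ω | T ω ≤ k} +
      P.real {ω | B ω = 1} * P.real {ω | T ω + 1 ≤ k} := by
  have hsplit : {ω | B ω + T ω ≤ k} =
      (B ⁻¹' {0} ∩ T ⁻¹' {m | m ≤ k}) ∪ (B ⁻¹' {1} ∩ T ⁻¹' {m | m + 1 ≤ k}) := by
    ext ω
    have := hB1 ω
    simp only [Set.mem_ofPred_eq, Set.mem_union, Set.mem_inter_iff, Set.mem_preimage,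
      Set.mem_singleton_iff]
    omega
  have hdisj : Disjoint (B ⁻¹' {0} ∩ T ⁻¹' {m | m ≤ k}) (B ⁻¹' {1} ∩ T ⁻¹' {m | m + 1 ≤ k}) :=
    Set.disjoint_left.2 fun ω h0 h1 => by simp_all
  have hB0 : B ⁻¹' {0} = (B ⁻¹' {1})ᶜ := by
    ext ω
    have := hB1 ω
    simp only [Set.mem_preimage, Set.mem_singleton_iff, Set.mem_compl_iff]
    omega
  have hprod : ∀ c (S : Set ℕ),
      P.real (B ⁻¹' {c} ∩ T ⁻¹' S) = P.real (B ⁻¹' {c}) * P.real (T ⁻¹' S) := fun c S => by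
    simp only [measureReal_def, ENNReal.toReal_mul,
      hBT.measure_inter_preimage_eq_mul _ _ (measurableSet_singleton c) trivial]
  rw [hsplit, measureReal_union hdisj ((hB (measurableSet_singleton 1)).inter (hT trivial)),
    hprod, hprod, hB0, measureReal_compl (hB (measurableSet_singleton 1)), probReal_univ]
  rfl

lemma measureReal_sum_le_le_binomCDF {ι : Type*} {L : ι → Ω → ℕ} (hmeas : ∀ i, Measurable (L i))
    (hBool : ∀ i ω, L i ω ≤ 1) (hindep : iIndepFun L P) {α : ℝ} (hα0 : 0 ≤ α)
    (hα : ∀ i, α ≤ P.real {ω | L i ω = 1}) (s : Finset ι) (k : ℕ) :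
    P.real {ω | ∑ i ∈ s, L i ω ≤ k} ≤ binomCDF s.card α k := by
  classical
  induction s using Finset.induction_on generalizing k with
  | empty => simp
  | insert a t ha ih =>
    have hα1 : α ≤ 1 := (hα a).trans measureReal_le_one
    have hμ1 : P.real {ω | L a ω = 1} ≤ 1 := measureReal_le_one
    have hindep_a : IndepFun (L a) (fun ω => ∑ i ∈ t, L i ω) P := by
      simpa only [Finset.sum_fn] using (hindep.indepFun_finsetSum_of_notMem hmeas ha).symm
    simp only [Finset.sum_insert ha, Finset.card_insert_of_notMem ha]
    rw [measureReal_add_le_eq_of_indepFun (hmeas a) (Finset.measurable_sum t fun i _ => hmeas i)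
      (hBool a) hindep_a]
    cases k with
    | zero =>
      simp only [Nat.add_one_le_iff, Nat.not_lt_zero, Set.ofPred_false, measureReal_empty,
        mul_zero, add_zero, binomCDF_succ_zero]
      nlinarith [ih 0, hα a, measureReal_nonneg (μ := P) (s := {ω | ∑ i ∈ t, L i ω ≤ 0})]
    | succ k =>
      simp only [add_le_add_iff_right, binomCDF_succ_succ]
      set μ := P.real {ω | L a ω = 1}
      have hmono := binomCDF_monotone (n := t.card) hα0 hα1 k.le_succ
      calc (1 - μ) * P.real {ω | ∑ i ∈ t, L i ω ≤ k + 1} + μ * P.real {ω | ∑ i ∈ t, L i ω ≤ k}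
          ≤ (1 - μ) * binomCDF t.card α (k + 1) + μ * binomCDF t.card α k := by
            gcongr
            exacts [ih (k + 1), ih k]
        -- lowering the success probability from μ to α moves mass from `F k` to `F (k + 1)`
        _ ≤ (1 - α) * binomCDF t.card α (k + 1) + α * binomCDF t.card α k := by
            nlinarith [hα a]

end dominance

theorem binomial_tail_pvalue_superuniform_general
    {Ω : Type*} [MeasurableSpace Ω] (P : Measure Ω) [IsProbabilityMeasure P]
    {n : ℕ} (L : Fin n → Ω → ℕ)
    (hmeas : ∀ i, Measurable (L i))
    (hBool : ∀ i ω, L i ω ≤ 1)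
    (hindep : iIndepFun L P)
    (μ α : ℝ) (hα : α ∈ Set.Icc (0 : ℝ) 1) (hμα : μ > α)
    (hbern : ∀ i, P {ω | L i ω = 1} = ENNReal.ofReal μ)
    (u : ℝ) :
    P {ω | binomCDF n α (∑ i, L i ω) ≤ u} ≤ ENNReal.ofReal u := by
  have hα_le : ∀ i, α ≤ P.real {ω | L i ω = 1} := fun i => by
    rw [measureReal_def, hbern, ENNReal.toReal_ofReal']
    exact hμα.le.trans (le_max_left μ 0)
  have hS : ∀ k, P {ω | ∑ i, L i ω ≤ k} ≤ ENNReal.ofReal (binomCDF n α k) := fun k => by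
    rw [← ofReal_measureReal]
    simpa using ENNReal.ofReal_le_ofReal
      (measureReal_sum_le_le_binomCDF hmeas hBool hindep hα.1 hα_le Finset.univ k)
  exact (binomCDF_monotone hα.1 hα.2).isSuperUniform_comp hS u

/-- **Theorem 2 (Binomial tail bound p-values).**
Let `L 1, …, L n` be i.i.d. Bernoulli(μ) losses (i.e. `{0,1}`-valued, independent, each equal
to `1` with probability `μ`), let `α ∈ [0,1]` with `μ > α`, and let `S = Σ_i L i`. Then the
p-value `p = P(Binom(n,α) ≤ S) = F_{n,α}(S)` is super-uniform:
`P(p ≤ u) ≤ u` for every `u ∈ [0,1]`. -/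
theorem binomial_tail_pvalue_superuniform
    {Ω : Type*} [MeasurableSpace Ω] (P : Measure Ω) [IsProbabilityMeasure P]
    {n : ℕ} (L : Fin n → Ω → ℕ)
    (hmeas : ∀ i, Measurable (L i))
    (hBool : ∀ i ω, L i ω ≤ 1)
    (hindep : iIndepFun L P)
    (μ α : ℝ) (hμ : μ ∈ Set.Icc (0 : ℝ) 1) (hα : α ∈ Set.Icc (0 : ℝ) 1) (hμα : μ > α)
    (hbern : ∀ i, P {ω | L i ω = 1} = ENNReal.ofReal μ)
    (u : ℝ) (hu : u ∈ Set.Icc (0 : ℝ) 1) :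
    P {ω | binomCDF n α (∑ i, L i ω) ≤ u} ≤ ENNReal.ofReal u :=
  binomial_tail_pvalue_superuniform_general P L hmeas hBool hindep μ α hα hμα hbern u
end

section
/- Let Λ be a finite nonempty set of hyperparameter configurations, and for each λ ∈ Λ let L_λ be an integrable loss with (deterministic) expectation E[L_λ], and let p_λ be a [0,1]-valued random variable (a p-value computed from the calibration data). Fix α ∈ ℝ and δ ∈ (0,1]. Let Λ_0 = {λ ∈ Λ : E[L_λ] > α} be the set of true null hypotheses, and assume each p_λ with λ ∈ Λ_0 is super-uniform, i.e., P(p_λ ≤ u) ≤ u for all u ∈ [0,1]. Define the Bonferroni selection Λ_valid = {λ ∈ Λ : p_λ ≤ δ/|Λ|}. Then P( sup_{λ ∈ Λ_valid} E[L_λ] ≤ α ) ≥ 1 − δ, where the supremum over the empty set is interpreted as being ≤ α (i.e., the event is that every λ ∈ Λ_valid satisfies E[L_λ] ≤ α). -/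
/-!
The Bonferroni selection picks a true null `l` only on the event `p l ≤ δ / |Λ|`, which has
probability at most `δ / |Λ|` by super-uniformity. A union bound over the at most `|Λ|` true
nulls shows that some true null is selected with probability at most `δ`.
-/

open MeasureTheory Set

section Bonferroni

variable {Ω : Type*} [MeasurableSpace Ω] (P : Measure Ω)

def SuperUniform (X : Ω → ℝ) : Prop :=
  ∀ u ∈ Icc (0 : ℝ) 1, P {ω | X ω ≤ u} ≤ ENNReal.ofReal u

theorem measure_exists_null_le_le_card_mul {ι : Type*} [Fintype ι] (H₀ : ι → Prop)
    (p : ι → Ω → ℝ) (hsuper : ∀ i, H₀ i → SuperUniform P (p i)) {t : ℝ} (ht : t ∈ Icc 0 1) :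
    P {ω | ∃ i, H₀ i ∧ p i ω ≤ t} ≤ Fintype.card ι * ENNReal.ofReal t := by
  have hnull : ∀ i, P {ω | H₀ i ∧ p i ω ≤ t} ≤ ENNReal.ofReal t := fun i => by
    by_cases hi : H₀ i
    · simpa only [hi, true_and] using hsuper i hi t ht
    · simp only [hi, false_and, ofPred_false, measure_empty, zero_le]
  calc P {ω | ∃ i, H₀ i ∧ p i ω ≤ t}
      = P (⋃ i, {ω | H₀ i ∧ p i ω ≤ t}) := by rw [ofPred_exists]
    _ ≤ ∑ i, P {ω | H₀ i ∧ p i ω ≤ t} := measure_iUnion_fintype_le P _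
    _ ≤ ∑ _i : ι, ENNReal.ofReal t := Finset.sum_le_sum fun i _ => hnull i
    _ = Fintype.card ι * ENNReal.ofReal t := by simp

end Bonferroni

theorem bonferroni_level_mem_Icc {δ : ℝ} (hδ : δ ∈ Ioc 0 1) (n : ℕ) :
    δ / n ∈ Icc (0 : ℝ) 1 := by
  refine ⟨by have := hδ.1; positivity, ?_⟩
  rcases n.eq_zero_or_pos with rfl | hn
  · simp
  · exact (div_le_self hδ.1.le (by exact_mod_cast hn)).trans hδ.2

theorem natCast_mul_ofReal_div_le (δ : ℝ) (n : ℕ) :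
    (n : ENNReal) * ENNReal.ofReal (δ / n) ≤ ENNReal.ofReal δ := by
  rcases n.eq_zero_or_pos with rfl | hn
  · simp
  · rw [← ENNReal.ofReal_natCast, ← ENNReal.ofReal_mul n.cast_nonneg,
      mul_div_cancel₀ δ (by positivity)]

theorem ofReal_one_sub_le_prob {Ω : Type*} [MeasurableSpace Ω] {P : Measure Ω}
    [IsProbabilityMeasure P] {s : Set Ω} {δ : ℝ} (hδ : 0 ≤ δ)
    (hcompl : P sᶜ ≤ ENNReal.ofReal δ) : ENNReal.ofReal (1 - δ) ≤ P s := by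
  rw [ENNReal.ofReal_sub 1 hδ, ENNReal.ofReal_one, tsub_le_iff_right]
  calc (1 : ENNReal) = P univ := measure_univ.symm
    _ ≤ P s + P sᶜ := measure_univ_le_add_compl s
    _ ≤ P s + ENNReal.ofReal δ := by gcongr

theorem learn_then_test_bonferroni_general
    {Ω : Type*} [MeasurableSpace Ω] (P : Measure Ω) [IsProbabilityMeasure P]
    {Λ : Type*} [Fintype Λ]
    (L : Λ → Ω → ℝ)
    (p : Λ → Ω → ℝ)
    (α : ℝ) (δ : ℝ) (hδ : δ ∈ Set.Ioc (0 : ℝ) 1)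
    (hsuper : ∀ l, α < ∫ ω, L l ω ∂P →
      ∀ u ∈ Set.Icc (0 : ℝ) 1, P {ω | p l ω ≤ u} ≤ ENNReal.ofReal u) :
    P {ω | ∀ l, p l ω ≤ δ / (Fintype.card Λ : ℝ) → ∫ ω', L l ω' ∂P ≤ α}
      ≥ ENNReal.ofReal (1 - δ) := by
  set t := δ / (Fintype.card Λ : ℝ)
  have hselected_null :
      {ω | ∀ l, p l ω ≤ t → ∫ ω', L l ω' ∂P ≤ α}ᶜ
        = {ω | ∃ l, α < ∫ ω', L l ω' ∂P ∧ p l ω ≤ t} := by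
    ext ω
    simp only [mem_compl_iff, mem_ofPred_eq, not_forall, not_le, exists_prop, and_comm]
  refine ofReal_one_sub_le_prob hδ.1.le ?_
  calc _ = P {ω | ∃ l, α < ∫ ω', L l ω' ∂P ∧ p l ω ≤ t} := by rw [hselected_null]
    _ ≤ Fintype.card Λ * ENNReal.ofReal t :=
      measure_exists_null_le_le_card_mul P _ p hsuper (bonferroni_level_mem_Icc hδ _)
    _ ≤ ENNReal.ofReal δ := natCast_mul_ofReal_div_le δ _

/-- **Theorem 1 (Learn Then Test), instantiated with the Bonferroni correction.**
Let `Λ` be a finite nonempty set of configurations, `L λ` an integrable loss with expectation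
`E[L λ] = ∫ L λ dP`, and `p λ` a `[0,1]`-valued p-value. Assume each `p λ` with
`E[L λ] > α` (a true null) is super-uniform. Then the Bonferroni selection
`Λ_valid(ω) = {λ : p λ ω ≤ δ / |Λ|}` satisfies
`P(every λ ∈ Λ_valid has E[L λ] ≤ α) ≥ 1 - δ`. -/
theorem learn_then_test_bonferroni
    {Ω : Type*} [MeasurableSpace Ω] (P : Measure Ω) [IsProbabilityMeasure P]
    {Λ : Type*} [Fintype Λ] [Nonempty Λ]
    (L : Λ → Ω → ℝ) (hL : ∀ l, Integrable (L l) P)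
    (p : Λ → Ω → ℝ) (hp01 : ∀ l ω, p l ω ∈ Set.Icc (0 : ℝ) 1)
    (α : ℝ) (δ : ℝ) (hδ : δ ∈ Set.Ioc (0 : ℝ) 1)
    (hsuper : ∀ l, α < ∫ ω, L l ω ∂P →
      ∀ u ∈ Set.Icc (0 : ℝ) 1, P {ω | p l ω ≤ u} ≤ ENNReal.ofReal u) :
    P {ω | ∀ l, p l ω ≤ δ / (Fintype.card Λ : ℝ) → ∫ ω', L l ω' ∂P ≤ α}
      ≥ ENNReal.ofReal (1 - δ) :=
  learn_then_test_bonferroni_general P L p α δ hδ hsuper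
end

section
/- Let (X_1, Y_1), …, (X_n, Y_n), (X_test, Y_test) be i.i.d. random pairs taking values in X × Y, let S : X × Y → ℝ be a measurable non-conformity score function, and let α ∈ (0,1) with ⌈(n+1)(1−α)⌉ ≤ n. Let q_α be the ⌈(n+1)(1−α)⌉-th smallest value among the calibration scores S(X_1, Y_1), …, S(X_n, Y_n), and define the prediction set C(X_test) = { y ∈ Y : S(X_test, y) ≤ q_α }. Then P( Y_test ∈ C(X_test) ) ≥ 1 − α. -/
/-!
Write `T i = S (Z i)` for the `n + 1` scores and call the rank of `T j` the number of scores
strictly below it. The test score is at most the `(r + 1)`-th smallest calibration score exactly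
when the rank of the test score is at most `r`. For every realisation at least `r + 1` of the
`n + 1` scores have rank at most `r` (all those not above the `(r + 1)`-th smallest), while the
scores are i.i.d., so their joint law is invariant under permutations and each of the `n + 1`
rank events has the same probability `p`. Integrating the count gives `r + 1 ≤ (n + 1) p`, and
`r + 1 = ⌈(n + 1)(1 - α)⌉` gives `p ≥ 1 - α`.
-/

open MeasureTheory ProbabilityTheory

/-- 1-indexed: `orderStat l (m + 1)` is the entry at index `m` of the sorted list; an index out
of range gives the junk value `0`. -/
noncomputable def orderStat (l : List ℝ) (k : ℕ) : ℝ :=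
  (l.insertionSort (· ≤ ·)).getD (k - 1) 0

open Finset
open scoped ENNReal

namespace List

variable {α : Type*} [LinearOrder α] {s : List α}

theorem Pairwise.countP_lt_getElem_le (hs : s.Pairwise (· ≤ ·)) {m : ℕ} (hm : m < s.length) :
    s.countP (· < s[m]) ≤ m := by
  have hdrop : (s.drop m).countP (· < s[m]) = 0 := by
    have hsorted := hs.drop (i := m)
    rw [drop_eq_getElem_cons hm, pairwise_cons] at hsorted
    rw [drop_eq_getElem_cons hm, countP_cons_of_neg (by simp), countP_eq_zero]
    simpa using hsorted.1
  have hsplit : s.countP (· < s[m])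
      = (s.take m).countP (· < s[m]) + (s.drop m).countP (· < s[m]) := by
    rw [← countP_append, take_append_drop]
  rw [hsplit, hdrop, add_zero]
  exact countP_le_length.trans (length_take_le _ _)

theorem Pairwise.lt_countP_le_getElem (hs : s.Pairwise (· ≤ ·)) {m : ℕ} (hm : m < s.length) :
    m < s.countP (· ≤ s[m]) := by
  have hle : ∀ a ∈ s.take m, a ≤ s[m] := by
    rw [← take_append_drop m s, pairwise_append] at hs
    intro a ha
    exact hs.2.2 a ha _ (drop_eq_getElem_cons hm ▸ mem_cons_self)
  have htake : (s.take m).countP (· ≤ s[m]) = m := by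
    rw [countP_eq_length.mpr (by simpa using hle), length_take_of_le hm.le]
  have hsplit : s.countP (· ≤ s[m])
      = (s.take m).countP (· ≤ s[m]) + (s.drop m).countP (· ≤ s[m]) := by
    rw [← countP_append, take_append_drop]
  rw [hsplit, htake, drop_eq_getElem_cons hm, countP_cons_of_pos (by simp)]
  omega

theorem countP_ofFn {β : Type*} {m : ℕ} (t : Fin m → β) (p : β → Prop) [DecidablePred p] :
    (ofFn t).countP (p ·) = #{i | p (t i)} := by
  rw [← Multiset.coe_countP, ← Fin.univ_val_map, Multiset.countP_map]
  rfl

end List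

section OrderStat

variable {l : List ℝ} {m : ℕ}

theorem orderStat_add_one_eq_getElem (hm : m < l.length) :
    orderStat l (m + 1) = (l.insertionSort (· ≤ ·))[m]'(by simpa using hm) := by
  rw [orderStat, Nat.add_sub_cancel, List.getD_eq_getElem]

theorem le_orderStat_add_one_iff (hm : m < l.length) {x : ℝ} :
    x ≤ orderStat l (m + 1) ↔ l.countP (· < x) ≤ m := by
  have hs := List.pairwise_insertionSort (· ≤ ·) l
  have hms : m < (l.insertionSort (· ≤ ·)).length := by simpa using hm
  rw [orderStat_add_one_eq_getElem hm, ← (List.perm_insertionSort (· ≤ ·) l).countP_eq]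
  constructor
  · intro hx
    refine le_trans (List.countP_mono_left fun y _ hy => ?_) (hs.countP_lt_getElem_le hms)
    simp only [decide_eq_true_eq] at hy ⊢
    exact hy.trans_le hx
  · intro hcount
    by_contra! hx
    have hmono := List.countP_mono_left (l := l.insertionSort (· ≤ ·))
      (p := (· ≤ (l.insertionSort (· ≤ ·))[m])) (q := (· < x))
      fun y _ hy => by simp only [decide_eq_true_eq] at hy ⊢; exact hy.trans_lt hx
    have := hs.lt_countP_le_getElem hms
    omega

theorem lt_countP_le_orderStat_add_one (hm : m < l.length) :
    m < l.countP (· ≤ orderStat l (m + 1)) := by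
  rw [orderStat_add_one_eq_getElem hm, ← (List.perm_insertionSort (· ≤ ·) l).countP_eq]
  exact (List.pairwise_insertionSort _ l).lt_countP_le_getElem _

end OrderStat

section StrictRank

variable {ι : Type*} [Fintype ι]

noncomputable def strictRank (t : ι → ℝ) (j : ι) : ℕ :=
  #{i | t i < t j}

theorem strictRank_comp_perm (t : ι → ℝ) (σ : Equiv.Perm ι) (j : ι) :
    strictRank (t ∘ σ) j = strictRank t (σ j) := by
  rw [strictRank, strictRank, card_filter, card_filter]
  exact Equiv.sum_comp σ fun i => if t i < t (σ j) then 1 else 0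

theorem measurable_strictRank (j : ι) : Measurable fun t : ι → ℝ => strictRank t j := by
  simp only [strictRank, card_filter]
  exact Finset.measurable_sum _ fun i _ => Measurable.ite
    (measurableSet_lt (measurable_pi_apply i) (measurable_pi_apply j)) measurable_const
    measurable_const

theorem strictRank_last {n : ℕ} (t : Fin (n + 1) → ℝ) :
    strictRank t (Fin.last n) = #{i : Fin n | t i.castSucc < t (Fin.last n)} := by
  rw [strictRank, card_filter, card_filter, Fin.sum_univ_castSucc]
  simp

theorem le_orderStat_castSucc_iff_strictRank_le {n r : ℕ} (hr : r < n) (t : Fin (n + 1) → ℝ) :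
    t (Fin.last n) ≤ orderStat (List.ofFn fun i : Fin n => t i.castSucc) (r + 1) ↔
      strictRank t (Fin.last n) ≤ r := by
  rw [le_orderStat_add_one_iff (by simpa using hr), List.countP_ofFn, strictRank_last]

theorem lt_card_strictRank_le {m r : ℕ} (t : Fin m → ℝ) (hr : r < m) :
    r < #{j | strictRank t j ≤ r} := by
  have hlen : r < (List.ofFn t).length := by simpa using hr
  set v := orderStat (List.ofFn t) (r + 1)
  calc r < (List.ofFn t).countP (· ≤ v) := lt_countP_le_orderStat_add_one hlen
    _ = #{j | t j ≤ v} := List.countP_ofFn t (· ≤ v)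
    _ ≤ #{j | strictRank t j ≤ r} := by
        refine card_le_card fun j hj => mem_filter.mpr ⟨mem_univ j, ?_⟩
        rw [strictRank, ← List.countP_ofFn t (· < t j)]
        exact (le_orderStat_add_one_iff hlen).mp (mem_filter.mp hj).2

end StrictRank

theorem MeasureTheory.Measure.pi_map_comp_perm {ι β : Type*} [Fintype ι] [MeasurableSpace β]
    (μ : Measure β) [SigmaFinite μ] (σ : Equiv.Perm ι) :
    (Measure.pi fun _ : ι => μ).map (fun t => t ∘ σ) = Measure.pi fun _ => μ := by
  have := (measurePreserving_arrowCongr' (fun _ : ι => μ) (fun _ => μ) σ.symm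
    (MeasurableEquiv.refl β) fun _ => MeasurePreserving.id μ).map_eq
  convert this using 2
  ext t i
  simp [MeasurableEquiv.arrowCongr', Equiv.arrowCongr']

theorem MeasureTheory.natCast_mul_measure_univ_le_sum {Ω ι : Type*} [MeasurableSpace Ω]
    [Fintype ι] (μ : Measure Ω) {E : ι → Set Ω} [∀ ω, DecidablePred (ω ∈ E ·)]
    (hE : ∀ j, MeasurableSet (E j)) {k : ℕ} (h : ∀ ω, k ≤ #{j | ω ∈ E j}) :
    k * μ Set.univ ≤ ∑ j, μ (E j) := by
  calc k * μ Set.univ = ∫⁻ _, (k : ℝ≥0∞) ∂μ := (lintegral_const _).symm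
    _ ≤ ∫⁻ ω, ∑ j, (E j).indicator 1 ω ∂μ := lintegral_mono fun ω => by
        have hω := h ω
        rw [card_filter] at hω
        simp only [Set.indicator_apply, Pi.one_apply]
        exact_mod_cast hω
    _ = ∑ j, μ (E j) := by
        rw [lintegral_finsetSum _ fun j _ => measurable_one.indicator (hE j)]
        simp only [lintegral_indicator_one (hE _)]

theorem add_one_le_mul_pi_strictRank_le {m r : ℕ} (μ : Measure ℝ) [IsProbabilityMeasure μ]
    (hr : r < m) (j : Fin m) :
    (r + 1 : ℕ) ≤ m * (Measure.pi fun _ : Fin m => μ) {t | strictRank t j ≤ r} := by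
  set ν := Measure.pi fun _ : Fin m => μ
  set E : Fin m → Set (Fin m → ℝ) := fun i => {t | strictRank t i ≤ r}
  have hE : ∀ i, MeasurableSet (E i) :=
    fun i => measurableSet_le (measurable_strictRank i) measurable_const
  have hν : ∀ i, ν (E i) = ν (E j) := by
    intro i
    have hpre : E i = (fun t => t ∘ Equiv.swap i j) ⁻¹' E j := by
      ext t
      simp [E, strictRank_comp_perm]
    have hσ : Measurable fun t : Fin m → ℝ => t ∘ Equiv.swap i j :=
      measurable_pi_lambda _ fun _ => measurable_pi_apply _
    rw [hpre, ← Measure.map_apply hσ (hE j), Measure.pi_map_comp_perm]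
  have := natCast_mul_measure_univ_le_sum ν hE fun t => lt_card_strictRank_le t hr
  simpa [hν] using this

theorem ENNReal.ofReal_le_of_natCast_mul_le {a : ℝ} {p : ℝ≥0∞} {N k : ℕ} (hN : N ≠ 0)
    (ha : N * a ≤ k) (hk : (k : ℝ≥0∞) ≤ N * p) : ENNReal.ofReal a ≤ p := by
  calc ENNReal.ofReal a = ENNReal.ofReal (a * N) / N := by
        rw [ENNReal.ofReal_mul' (Nat.cast_nonneg _), ENNReal.ofReal_natCast,
          ENNReal.mul_div_cancel_right (by exact_mod_cast hN) (ENNReal.natCast_ne_top _)]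
    _ ≤ k / N := by
        gcongr
        exact ENNReal.ofReal_le_of_le_toReal (by simpa [mul_comm] using ha)
    _ ≤ p := ENNReal.div_le_of_le_mul' hk

/-- **Split conformal prediction coverage guarantee (Section 2.1).**
Let `Z 0, …, Z n` be i.i.d. pairs in `𝒳 × 𝒴` (the first `n` forming the calibration set and
`Z n = (X_test, Y_test)`), `S : 𝒳 × 𝒴 → ℝ` a measurable non-conformity score, and
`α ∈ (0,1)` with `⌈(n+1)(1-α)⌉ ≤ n`. Let `q_α` be the `⌈(n+1)(1-α)⌉`-th smallest calibration
score and `C(X_test) = {y | S (X_test, y) ≤ q_α}`. Then `P(Y_test ∈ C(X_test)) ≥ 1 - α`. -/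
theorem split_conformal_prediction_set_coverage
    {Ω : Type*} [MeasurableSpace Ω] (P : Measure Ω) [IsProbabilityMeasure P]
    {𝒳 𝒴 : Type*} [MeasurableSpace 𝒳] [MeasurableSpace 𝒴]
    {n : ℕ} (Z : Fin (n + 1) → Ω → 𝒳 × 𝒴)
    (hmeas : ∀ i, Measurable (Z i))
    (hindep : iIndepFun Z P)
    (hident : ∀ i j, IdentDistrib (Z i) (Z j) P P)
    (S : 𝒳 × 𝒴 → ℝ) (hS : Measurable S)
    (α : ℝ) (hα : α ∈ Set.Ioo (0 : ℝ) 1)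
    (hk : ⌈((n : ℝ) + 1) * (1 - α)⌉₊ ≤ n) :
    P {ω | (Z (Fin.last n) ω).2 ∈
        {y : 𝒴 | S ((Z (Fin.last n) ω).1, y) ≤
          orderStat (List.ofFn fun i : Fin n => S (Z i.castSucc ω)) ⌈((n : ℝ) + 1) * (1 - α)⌉₊}}
      ≥ ENNReal.ofReal (1 - α) := by
  obtain ⟨r, hr⟩ : ∃ r, ⌈((n : ℝ) + 1) * (1 - α)⌉₊ = r + 1 :=
    Nat.exists_eq_add_one.mpr (Nat.ceil_pos.mpr (mul_pos (by positivity) (sub_pos.mpr hα.2)))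
  rw [hr] at hk ⊢
  set T : Fin (n + 1) → Ω → ℝ := fun i => S ∘ Z i
  have hT : ∀ i, Measurable (T i) := fun i => hS.comp (hmeas i)
  have hlaw : P.map (fun ω i => T i ω) = Measure.pi fun _ => P.map (T (Fin.last n)) := by
    rw [(hindep.comp _ fun _ => hS).map_fun_eq_pi_map fun i => (hT i).aemeasurable]
    exact congrArg _ (funext fun i => ((hident i _).comp hS).map_eq)
  have : IsProbabilityMeasure (P.map (T (Fin.last n))) :=
    Measure.isProbabilityMeasure_map (hT _).aemeasurable
  suffices h : ENNReal.ofReal (1 - α) ≤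
      P ((fun ω i => T i ω) ⁻¹' {t | strictRank t (Fin.last n) ≤ r}) by
    convert h using 2
    ext ω
    exact le_orderStat_castSucc_iff_strictRank_le hk fun i => T i ω
  refine ENNReal.ofReal_le_of_natCast_mul_le (k := r + 1) n.add_one_ne_zero ?_ ?_
  · simpa [hr] using Nat.le_ceil (((n : ℝ) + 1) * (1 - α))
  · rw [← Measure.map_apply (measurable_pi_lambda _ hT)
      (measurableSet_le (measurable_strictRank _) measurable_const), hlaw]
    exact add_one_le_mul_pi_strictRank_le (P.map (T (Fin.last n))) (by omega) _
end
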